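/- Let p = 2n with n ≥ 1 an integer, m ≥ 0 an integer, and let k be an integer with pm/2 < k < p(m+1)/2, so k = pm/2 + l with 1 ≤ l ≤ n−1. Set δ = 1 − l/n ∈ (0,1). Then ((pm/2)!)^δ · ((p(m+1)/2)!)^{1−δ} ≤ (p/2)! · k!. -/
import Mathlib

open Nat

lemma aux_fact_le (a : ℕ) : ∀ b : ℕ, (a + b)! ≤ a ! * (a + b) ^ b
  | 0 => by simp
  | b + 1 => by
    have ih := aux_fact_le a b
    calc (a + (b + 1))! = (a + b + 1) * (a + b)! := by
          rw [← Nat.add_assoc]; rfl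
      _ ≤ (a + b + 1) * (a ! * (a + b) ^ b) := Nat.mul_le_mul_left _ ih
      _ ≤ (a + (b + 1)) * (a ! * (a + (b + 1)) ^ b) := by
          have h1 : a + b + 1 = a + (b + 1) := by omega
          have h2 : (a + b) ^ b ≤ (a + (b + 1)) ^ b :=
            Nat.pow_le_pow_left (by omega) b
          rw [h1]
          exact Nat.mul_le_mul_left _ (Nat.mul_le_mul_left _ h2)
      _ = a ! * (a + (b + 1)) ^ (b + 1) := by ring

lemma aux_pow_le (n : ℕ) : ∀ l : ℕ, l ≤ n → n ^ l ≤ l ! * n.descFactorial l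
  | 0, _ => by simp
  | l + 1, h => by
    have ih := aux_pow_le n l (by omega)
    have hd : n.descFactorial (l + 1) = (n - l) * n.descFactorial l :=
      Nat.descFactorial_succ n l
    have key : n ≤ (l + 1) * (n - l) := by
      have : (l + 1) * (n - l) = l * (n - l) + (n - l) := by ring
      have hnl : 1 ≤ n - l := by omega
      calc n = l + (n - l) := by omega
        _ ≤ l * (n - l) + (n - l) := by
            have : l ≤ l * (n - l) := Nat.le_mul_of_pos_right l hnl
            omega
        _ = (l + 1) * (n - l) := by ring
    calc n ^ (l + 1) = n * n ^ l := by ring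
      _ ≤ n * (l ! * n.descFactorial l) := Nat.mul_le_mul_left _ ih
      _ ≤ ((l + 1) * (n - l)) * (l ! * n.descFactorial l) :=
          Nat.mul_le_mul_right _ key
      _ = (l + 1)! * n.descFactorial (l + 1) := by
          rw [hd, Nat.factorial_succ]; ring

lemma aux_main (n m : ℕ) : ∀ l : ℕ, l ≤ n →
    (n * (m + 1)) ^ l * (l ! * (n * m)!) ≤ n ^ l * (n * m + l)!
  | 0, _ => by simp
  | l + 1, h => by
    have ih := aux_main n m l (by omega)
    have key : n * (m + 1) * (l + 1) ≤ n * (n * m + l + 1) := by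
      have : (m + 1) * (l + 1) ≤ n * m + (l + 1) := by
        have : m * (l + 1) ≤ m * n := Nat.mul_le_mul_left m (by omega)
        nlinarith
      calc n * (m + 1) * (l + 1) = n * ((m + 1) * (l + 1)) := by ring
        _ ≤ n * (n * m + (l + 1)) := Nat.mul_le_mul_left n this
        _ = n * (n * m + l + 1) := by ring_nf
    calc (n * (m + 1)) ^ (l + 1) * ((l + 1)! * (n * m)!)
        = (n * (m + 1) * (l + 1)) * ((n * (m + 1)) ^ l * (l ! * (n * m)!)) := by
          rw [Nat.factorial_succ]; ring
      _ ≤ (n * (m + 1) * (l + 1)) * (n ^ l * (n * m + l)!) :=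
          Nat.mul_le_mul_left _ ih
      _ ≤ (n * (n * m + l + 1)) * (n ^ l * (n * m + l)!) :=
          Nat.mul_le_mul_right _ key
      _ = n ^ (l + 1) * ((n * m + l + 1) * (n * m + l)!) := by ring
      _ = n ^ (l + 1) * (n * m + (l + 1))! := by
          rw [show n * m + (l + 1) = (n * m + l) + 1 by omega, Nat.factorial_succ]

lemma aux_key (n m l : ℕ) (h : l ≤ n) :
    (n * (m + 1)) ^ l * (n * m)! ≤ n ! * (n * m + l)! := by
  have h1 := aux_main n m l h
  have h2 := aux_pow_le n l h
  have h3 : n.descFactorial l ≤ n ! := by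
    have := Nat.factorial_mul_descFactorial h
    calc n.descFactorial l ≤ (n - l)! * n.descFactorial l :=
          Nat.le_mul_of_pos_left _ (Nat.factorial_pos _)
      _ = n ! := this
  have h4 : n ^ l ≤ l ! * n ! := le_trans h2 (Nat.mul_le_mul_left _ h3)
  have h5 : l ! * ((n * (m + 1)) ^ l * (n * m)!) ≤ l ! * (n ! * (n * m + l)!) := by
    calc l ! * ((n * (m + 1)) ^ l * (n * m)!)
        = (n * (m + 1)) ^ l * (l ! * (n * m)!) := by ring
      _ ≤ n ^ l * (n * m + l)! := h1
      _ ≤ (l ! * n !) * (n * m + l)! := Nat.mul_le_mul_right _ h4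
      _ = l ! * (n ! * (n * m + l)!) := by ring
  exact Nat.le_of_mul_le_mul_left h5 (Nat.factorial_pos l)

/-- With `p = 2n`, `k = pm/2 + l = n*m + l`, `δ = 1 - l/n`, one has
`((pm/2)!)^δ * ((p(m+1)/2)!)^(1-δ) ≤ (p/2)! * k!`. -/
theorem stmt_2 (n m l : ℕ) (hn : 1 ≤ n) (hl : 1 ≤ l) (hl' : l ≤ n - 1)
    (δ : ℝ) (hδ : δ = 1 - (l : ℝ) / n) :
    ((Nat.factorial (n * m) : ℝ)) ^ δ *
      ((Nat.factorial (n * (m + 1)) : ℝ)) ^ (1 - δ)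
      ≤ (Nat.factorial n : ℝ) * (Nat.factorial (n * m + l) : ℝ) := by
  have hln : l ≤ n := by omega
  have hnR : (0 : ℝ) < n := by exact_mod_cast hn
  set t : ℝ := (l : ℝ) / n with ht
  have ht0 : 0 ≤ t := div_nonneg (by positivity) hnR.le
  have ht1 : t ≤ 1 := by
    rw [ht, div_le_one hnR]; exact_mod_cast hln
  have h1δ : 1 - δ = t := by rw [hδ]; ring
  set A : ℝ := ((n * m)! : ℝ) with hA
  set B : ℝ := ((n * (m + 1))! : ℝ) with hB
  set C : ℝ := ((n * (m + 1) : ℕ) : ℝ) with hC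
  have hApos : (0 : ℝ) < A := by rw [hA]; exact_mod_cast Nat.factorial_pos _
  have hCpos : (0 : ℝ) < C := by
    have h : 0 < n * (m + 1) := by positivity
    rw [hC]; exact_mod_cast h
  -- B ≤ A * C^n
  have hBle : B ≤ A * C ^ n := by
    rw [hA, hB, hC]
    have hnat : (n * (m + 1))! ≤ (n * m)! * (n * m + n) ^ n := aux_fact_le (n * m) n
    have he : n * m + n = n * (m + 1) := by ring
    rw [he] at hnat
    calc ((n * (m + 1))! : ℝ) ≤ (((n * m)! * (n * (m + 1)) ^ n : ℕ) : ℝ) := by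
          exact_mod_cast hnat
      _ = ((n * m)! : ℝ) * ((n * (m + 1) : ℕ) : ℝ) ^ n := by push_cast; ring
  have hδt : δ = 1 - t := by rw [hδ, ht]
  have hBnn : (0 : ℝ) ≤ B := by positivity
  calc A ^ δ * B ^ (1 - δ) = A ^ (1 - t) * B ^ t := by rw [hδt, show (1:ℝ) - (1 - t) = t by ring]
    _ ≤ A ^ (1 - t) * (A * C ^ n) ^ t :=
        mul_le_mul_of_nonneg_left (Real.rpow_le_rpow hBnn hBle ht0)
          (Real.rpow_nonneg hApos.le _)
    _ = A ^ (1 - t) * (A ^ t * (C ^ n) ^ t) := by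
        rw [Real.mul_rpow hApos.le (by positivity)]
    _ = A * (C ^ n) ^ t := by
        rw [← mul_assoc, ← Real.rpow_add hApos]; norm_num
    _ = A * C ^ (l : ℕ) := by
        congr 1
        rw [← Real.rpow_natCast C n, ← Real.rpow_natCast C l,
          ← Real.rpow_mul hCpos.le]
        congr 1
        rw [ht]
        field_simp
    _ ≤ ((n)! : ℝ) * ((n * m + l)! : ℝ) := by
        have := aux_key n m l hln
        calc A * C ^ (l : ℕ) = (((n * (m + 1)) ^ l * (n * m)! : ℕ) : ℝ) := by
              rw [hA, hC]; push_cast; ring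
          _ ≤ ((n ! * (n * m + l)! : ℕ) : ℝ) := by exact_mod_cast this
          _ = ((n)! : ℝ) * ((n * m + l)! : ℝ) := by push_cast; ring
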